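/- arXiv:1710.00321 — 2 statements merged into one kernel-verified Lean document; each statement's English description precedes it below -/
import Mathlib

section
/- Let H be in the block HNF form above, let x* = (α, β) ∈ ℤ^k × ℤ^s be an optimal solution of the SVP min_{x∈ℤⁿ\{0}} ‖Hx‖_p, and let M be any upper bound on the optimal value ‖Hx*‖_p. Then: (1) ‖α‖_1 ≤ M^p; (2) |β_i| ≤ 2^{i−1}·(M^p + M/2) for every i ∈ 1:s; (3) ‖β‖_1 ≤ 2^s·(M^p + M/2), and if 2^s ≤ Δ then ‖x*‖_1 ≤ (1+Δ)·M^p + Δ·M/2 < 2·(1+Δ)·M^p. -/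
open Matrix Real

/-- Data of an integer matrix in the permuted block Hermite normal form of the paper:
top `k` rows are `(I_k 0)`, middle `s` rows are `(A B)` with `B` lower triangular with
positive diagonal, entries `0 ≤ a_{ij} ≤ b_{ii}` and `0 ≤ b_{ij} ≤ b_{ii}`, and `m`
extra rows `(Ā B̄)`.  Here `n = k + s` and `d = k + s + m`. -/
structure BlockHNF (k s m : ℕ) where
  A : Matrix (Fin s) (Fin k) ℤ
  B : Matrix (Fin s) (Fin s) ℤ
  Abar : Matrix (Fin m) (Fin k) ℤ
  Bbar : Matrix (Fin m) (Fin s) ℤ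
  Bdiag_pos : ∀ i, 0 < B i i
  B_upper_zero : ∀ i j : Fin s, i < j → B i j = 0
  A_nonneg : ∀ i j, 0 ≤ A i j
  A_le_diag : ∀ i j, A i j ≤ B i i
  B_nonneg : ∀ i j : Fin s, j ≤ i → 0 ≤ B i j
  B_le_diag : ∀ i j : Fin s, j ≤ i → B i j ≤ B i i

/-- The full `d × n` matrix `H` determined by the block HNF data. -/
def BlockHNF.H {k s m : ℕ} (D : BlockHNF k s m) :
    Matrix ((Fin k ⊕ Fin s) ⊕ Fin m) (Fin k ⊕ Fin s) ℤ :=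
  Matrix.of fun r c =>
    match r, c with
    | Sum.inl (Sum.inl i), Sum.inl j => if i = j then 1 else 0
    | Sum.inl (Sum.inl _), Sum.inr _ => 0
    | Sum.inl (Sum.inr i), Sum.inl j => D.A i j
    | Sum.inl (Sum.inr i), Sum.inr j => D.B i j
    | Sum.inr i, Sum.inl j => D.Abar i j
    | Sum.inr i, Sum.inr j => D.Bbar i j

/-- `Δ` is the maximal absolute value of the `n × n` minors of `H`
(submatrices obtained by choosing `n` of the `d` rows). -/
def BlockHNF.IsMaxMinor {k s m : ℕ} (D : BlockHNF k s m) (Δ : ℤ) : Prop :=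
  IsGreatest {v : ℤ | ∃ f : (Fin k ⊕ Fin s) → ((Fin k ⊕ Fin s) ⊕ Fin m),
    Function.Injective f ∧ v = |(Matrix.of fun i j => D.H (f i) j).det|} Δ


/-- bounds on an optimal SVP solution `x* = (α, β)` in terms of an upper
bound `M` on the optimal value `‖Hx*‖_p`: `‖α‖₁ ≤ M^p`, `|β_i| ≤ 2^{i-1}(M^p + M/2)`
(1-indexed), `‖β‖₁ ≤ 2^s (M^p + M/2)`, and if `2^s ≤ Δ` then
`‖x*‖₁ ≤ (1+Δ)M^p + Δ·M/2 < 2(1+Δ)M^p`. -/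
theorem stmt10 (k s m : ℕ) (D : BlockHNF k s m) (Δ : ℤ)
    (p : ℝ) (hp : 1 ≤ p) (x : (Fin k ⊕ Fin s) → ℤ) (hx : x ≠ 0)
    (hopt : ∀ y : (Fin k ⊕ Fin s) → ℤ, y ≠ 0 →
      (∑ r, |(D.H.mulVec x r : ℝ)| ^ p) ^ (1 / p) ≤
        (∑ r, |(D.H.mulVec y r : ℝ)| ^ p) ^ (1 / p))
    (M : ℝ) (hM : (∑ r, |(D.H.mulVec x r : ℝ)| ^ p) ^ (1 / p) ≤ M) :
    (∑ i, |(x (Sum.inl i) : ℝ)|) ≤ M ^ p ∧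
    (∀ i : Fin s, |(x (Sum.inr i) : ℝ)| ≤ 2 ^ (i : ℕ) * (M ^ p + M / 2)) ∧
    (∑ i, |(x (Sum.inr i) : ℝ)|) ≤ 2 ^ s * (M ^ p + M / 2) ∧
    ((2 : ℤ) ^ s ≤ Δ →
      (∑ r, |(x r : ℝ)|) ≤ (1 + (Δ : ℝ)) * M ^ p + (Δ : ℝ) * M / 2 ∧
      (1 + (Δ : ℝ)) * M ^ p + (Δ : ℝ) * M / 2 < 2 * (1 + (Δ : ℝ)) * M ^ p) := by
  classical
  have hp0 : (0:ℝ) < p := lt_of_lt_of_le one_pos hp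
  have hpne : p ≠ 0 := ne_of_gt hp0
  set v : ((Fin k ⊕ Fin s) ⊕ Fin m) → ℤ := D.H.mulVec x with hvdef
  -- row values
  have hv1 : ∀ i : Fin k, v (Sum.inl (Sum.inl i)) = x (Sum.inl i) := by
    intro i
    simp [hvdef, Matrix.mulVec, dotProduct, Fintype.sum_sum_type, BlockHNF.H, ite_mul]
  have hv2 : ∀ i : Fin s, v (Sum.inl (Sum.inr i)) =
      (∑ j, D.A i j * x (Sum.inl j)) + ∑ j, D.B i j * x (Sum.inr j) := by
    intro i
    simp [hvdef, Matrix.mulVec, dotProduct, Fintype.sum_sum_type, BlockHNF.H]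
  -- |n| ≤ |n|^p for integers
  have habs : ∀ n : ℤ, (|n| : ℝ) ≤ (|n| : ℝ) ^ p := by
    intro n
    rcases eq_or_ne n 0 with h | h
    · simp [h, Real.zero_rpow hpne]
    · have h1 : (1:ℝ) ≤ (|n|:ℝ) := by exact_mod_cast Int.one_le_abs h
      calc (|n|:ℝ) = (|n|:ℝ) ^ (1:ℝ) := (Real.rpow_one _).symm
        _ ≤ (|n|:ℝ) ^ p := Real.rpow_le_rpow_of_exponent_le h1 hp
  set T : ℝ := ∑ r, |(v r : ℝ)| ^ p with hTdef
  have htnn : ∀ r : ((Fin k ⊕ Fin s) ⊕ Fin m), 0 ≤ |(v r : ℝ)| ^ p :=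
    fun r => Real.rpow_nonneg (abs_nonneg _) p
  have hT0 : 0 ≤ T := Finset.sum_nonneg fun r _ => htnn r
  -- some row of v is nonzero
  have hvne : ∃ r, v r ≠ 0 := by
    by_cases hα0 : ∃ i, x (Sum.inl i) ≠ 0
    · obtain ⟨i, hi⟩ := hα0
      exact ⟨Sum.inl (Sum.inl i), by rw [hv1]; exact hi⟩
    · push_neg at hα0
      have hβ0 : ∃ i, x (Sum.inr i) ≠ 0 := by
        by_contra h
        push_neg at h
        apply hx
        funext r
        cases r with
        | inl i => exact hα0 i
        | inr i => exact h i
      set t : Finset (Fin s) := Finset.univ.filter (fun i => x (Sum.inr i) ≠ 0) with htdef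
      have htne : t.Nonempty := by
        obtain ⟨i, hi⟩ := hβ0
        exact ⟨i, by simp [htdef, hi]⟩
      set i := t.min' htne with hidef
      have hi : x (Sum.inr i) ≠ 0 := by
        have := t.min'_mem htne
        simpa [htdef] using this
      have hmin : ∀ j : Fin s, j < i → x (Sum.inr j) = 0 := by
        intro j hj
        by_contra hne
        have hjt : j ∈ t := by simp [htdef, hne]
        exact absurd (t.min'_le j hjt) (not_le.mpr hj)
      refine ⟨Sum.inl (Sum.inr i), ?_⟩
      rw [hv2]
      have h1 : (∑ j, D.A i j * x (Sum.inl j)) = 0 := by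
        apply Finset.sum_eq_zero
        intro j _
        rw [hα0 j, mul_zero]
      have h2 : (∑ j, D.B i j * x (Sum.inr j)) = D.B i i * x (Sum.inr i) := by
        apply Finset.sum_eq_single
        · intro j _ hji
          rcases lt_or_gt_of_ne hji with h | h
          · rw [hmin j h, mul_zero]
          · rw [D.B_upper_zero i j h, zero_mul]
        · intro h
          exact absurd (Finset.mem_univ i) h
      rw [h1, h2, zero_add]
      exact mul_ne_zero (ne_of_gt (D.Bdiag_pos i)) hi
  -- 1 ≤ M
  have hM1 : (1:ℝ) ≤ M := by
    obtain ⟨r, hr⟩ := hvne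
    have h1 : (1:ℝ) ≤ |(v r : ℝ)| := by
      have := Int.one_le_abs hr
      exact_mod_cast this
    have h2 : (1:ℝ) ≤ |(v r : ℝ)| ^ p := Real.one_le_rpow h1 hp0.le
    have h3 : (1:ℝ) ≤ T :=
      le_trans h2 (Finset.single_le_sum (fun r _ => htnn r) (Finset.mem_univ r))
    have h4 : (1:ℝ) ≤ T ^ (1/p) := Real.one_le_rpow h3 (by positivity)
    exact le_trans h4 hM
  have hM0 : (0:ℝ) ≤ M := le_trans zero_le_one hM1
  have hS0 : (0:ℝ) ≤ M ^ p := Real.rpow_nonneg hM0 p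
  -- T ≤ M^p
  have hTM : T ≤ M ^ p := by
    have hTe : T = (T ^ (1/p)) ^ p := by
      rw [← Real.rpow_mul hT0, one_div_mul_cancel hpne, Real.rpow_one]
    rw [hTe]
    exact Real.rpow_le_rpow (Real.rpow_nonneg hT0 _) hM hp0.le
  -- split T
  have hTsplit : T = (∑ i, |(x (Sum.inl i) : ℝ)| ^ p)
      + (∑ i : Fin s, |(v (Sum.inl (Sum.inr i)) : ℝ)| ^ p)
      + (∑ i : Fin m, |(v (Sum.inr i) : ℝ)| ^ p) := by
    rw [hTdef, Fintype.sum_sum_type, Fintype.sum_sum_type]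
    simp only [hv1]
  have hsum3 : (0:ℝ) ≤ ∑ i : Fin m, |(v (Sum.inr i) : ℝ)| ^ p :=
    Finset.sum_nonneg fun i _ => htnn _
  -- goal (1)
  have hαsum : (∑ i, |(x (Sum.inl i) : ℝ)|) ≤ ∑ i, |(x (Sum.inl i) : ℝ)| ^ p := by
    apply Finset.sum_le_sum
    intro i _
    have := habs (x (Sum.inl i))
    push_cast at this
    exact this
  have hsum2 : (0:ℝ) ≤ ∑ i : Fin s, |(v (Sum.inl (Sum.inr i)) : ℝ)| ^ p :=
    Finset.sum_nonneg fun i _ => htnn _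
  have goal1 : (∑ i, |(x (Sum.inl i) : ℝ)|) ≤ M ^ p := by
    have := hTsplit ▸ hTM
    linarith
  -- per-row bound
  have hrow : ∀ i : Fin s,
      |(v (Sum.inl (Sum.inr i)) : ℝ)| + (∑ j, |(x (Sum.inl j) : ℝ)|) ≤ M ^ p := by
    intro i
    have h1 : |(v (Sum.inl (Sum.inr i)) : ℝ)| ≤ |(v (Sum.inl (Sum.inr i)) : ℝ)| ^ p := by
      have := habs (v (Sum.inl (Sum.inr i)))
      push_cast at this
      exact this
    have h2 : |(v (Sum.inl (Sum.inr i)) : ℝ)| ^ p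
        ≤ ∑ j : Fin s, |(v (Sum.inl (Sum.inr j)) : ℝ)| ^ p :=
      Finset.single_le_sum (f := fun j : Fin s => |(v (Sum.inl (Sum.inr j)) : ℝ)| ^ p)
        (fun j _ => htnn _) (Finset.mem_univ i)
    have := hTsplit ▸ hTM
    linarith
  -- integer triangular bound
  have hint : ∀ i : Fin s, |x (Sum.inr i)| ≤ |v (Sum.inl (Sum.inr i))|
      + (∑ j, |x (Sum.inl j)|) + ∑ j ∈ Finset.Iio i, |x (Sum.inr j)| := by
    intro i
    have hBpos := D.Bdiag_pos i
    have hB1 : (1:ℤ) ≤ D.B i i := hBpos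
    -- split the B-sum
    have h1 : (∑ j, D.B i j * x (Sum.inr j))
        = (∑ j ∈ Finset.Iic i, D.B i j * x (Sum.inr j)) := by
      symm
      apply Finset.sum_subset (Finset.subset_univ _)
      intro j _ hj
      rw [D.B_upper_zero i j (lt_of_not_ge (fun h => hj (Finset.mem_Iic.mpr h))), zero_mul]
    have h2 : (∑ j ∈ Finset.Iic i, D.B i j * x (Sum.inr j))
        = D.B i i * x (Sum.inr i) + ∑ j ∈ Finset.Iio i, D.B i j * x (Sum.inr j) := by
      rw [← Finset.Iio_insert, Finset.sum_insert (by simp)]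
    have heq : D.B i i * x (Sum.inr i) = v (Sum.inl (Sum.inr i))
        - (∑ j, D.A i j * x (Sum.inl j)) - ∑ j ∈ Finset.Iio i, D.B i j * x (Sum.inr j) := by
      rw [hv2 i, h1, h2]; ring
    have habs1 : |∑ j, D.A i j * x (Sum.inl j)| ≤ D.B i i * ∑ j, |x (Sum.inl j)| := by
      calc |∑ j, D.A i j * x (Sum.inl j)| ≤ ∑ j, |D.A i j * x (Sum.inl j)| :=
            Finset.abs_sum_le_sum_abs _ _
        _ ≤ ∑ j, D.B i i * |x (Sum.inl j)| := by
            apply Finset.sum_le_sum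
            intro j _
            rw [abs_mul, abs_of_nonneg (D.A_nonneg i j)]
            exact mul_le_mul_of_nonneg_right (D.A_le_diag i j) (abs_nonneg _)
        _ = D.B i i * ∑ j, |x (Sum.inl j)| := by rw [Finset.mul_sum]
    have habs2 : |∑ j ∈ Finset.Iio i, D.B i j * x (Sum.inr j)|
        ≤ D.B i i * ∑ j ∈ Finset.Iio i, |x (Sum.inr j)| := by
      calc |∑ j ∈ Finset.Iio i, D.B i j * x (Sum.inr j)|
          ≤ ∑ j ∈ Finset.Iio i, |D.B i j * x (Sum.inr j)| := Finset.abs_sum_le_sum_abs _ _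
        _ ≤ ∑ j ∈ Finset.Iio i, D.B i i * |x (Sum.inr j)| := by
            apply Finset.sum_le_sum
            intro j hj
            have hji : j ≤ i := le_of_lt (Finset.mem_Iio.mp hj)
            rw [abs_mul, abs_of_nonneg (D.B_nonneg i j hji)]
            exact mul_le_mul_of_nonneg_right (D.B_le_diag i j hji) (abs_nonneg _)
        _ = D.B i i * ∑ j ∈ Finset.Iio i, |x (Sum.inr j)| := by rw [Finset.mul_sum]
    have hmain : D.B i i * |x (Sum.inr i)| ≤ |v (Sum.inl (Sum.inr i))|
        + D.B i i * ((∑ j, |x (Sum.inl j)|) + ∑ j ∈ Finset.Iio i, |x (Sum.inr j)|) := by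
      have h3 : D.B i i * |x (Sum.inr i)| = |D.B i i * x (Sum.inr i)| := by
        rw [abs_mul, abs_of_pos hBpos]
      rw [h3, heq]
      calc |v (Sum.inl (Sum.inr i)) - (∑ j, D.A i j * x (Sum.inl j))
            - ∑ j ∈ Finset.Iio i, D.B i j * x (Sum.inr j)|
          ≤ |v (Sum.inl (Sum.inr i))| + |∑ j, D.A i j * x (Sum.inl j)|
            + |∑ j ∈ Finset.Iio i, D.B i j * x (Sum.inr j)| := by
            have t1 := abs_sub (v (Sum.inl (Sum.inr i)) - ∑ j, D.A i j * x (Sum.inl j))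
              (∑ j ∈ Finset.Iio i, D.B i j * x (Sum.inr j))
            have t2 := abs_sub (v (Sum.inl (Sum.inr i))) (∑ j, D.A i j * x (Sum.inl j))
            linarith
        _ ≤ _ := by rw [mul_add]; linarith
    have hw : |v (Sum.inl (Sum.inr i))| ≤ D.B i i * |v (Sum.inl (Sum.inr i))| :=
      le_mul_of_one_le_left (abs_nonneg _) hB1
    have := le_of_mul_le_mul_left (a := D.B i i)
      (by rw [mul_add]; linarith : D.B i i * |x (Sum.inr i)| ≤ D.B i i *
        (|v (Sum.inl (Sum.inr i))| + ((∑ j, |x (Sum.inl j)|) + ∑ j ∈ Finset.Iio i, |x (Sum.inr j)|)))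
      hBpos
    linarith
  -- geometric sums
  have hgeo : ∀ i : Fin s, (∑ j ∈ Finset.Iio i, (2:ℝ) ^ (j:ℕ)) = 2 ^ (i:ℕ) - 1 := by
    intro i
    have h1 : (∑ j ∈ Finset.Iio i, (2:ℝ) ^ (j:ℕ))
        = ∑ t ∈ (Finset.Iio i).map Fin.valEmbedding, (2:ℝ) ^ t := by
      rw [Finset.sum_map]
      simp [Fin.valEmbedding_apply]
    rw [h1, Fin.map_valEmbedding_Iio, Nat.Iio_eq_range,
      geom_sum_eq (by norm_num : (2:ℝ) ≠ 1)]
    norm_num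
  -- key induction
  have hkeyN : ∀ n : ℕ, ∀ i : Fin s, (i:ℕ) < n → |(x (Sum.inr i) : ℝ)| ≤ 2 ^ (i:ℕ) * M ^ p := by
    intro n
    induction n with
    | zero => intro i h; omega
    | succ n ih =>
      intro i hi
      have hintR : |(x (Sum.inr i) : ℝ)| ≤ |(v (Sum.inl (Sum.inr i)) : ℝ)|
          + (∑ j, |(x (Sum.inl j) : ℝ)|) + ∑ j ∈ Finset.Iio i, |(x (Sum.inr j) : ℝ)| := by
        exact_mod_cast hint i
      have hIio : (∑ j ∈ Finset.Iio i, |(x (Sum.inr j) : ℝ)|)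
          ≤ ∑ j ∈ Finset.Iio i, (2:ℝ) ^ (j:ℕ) * M ^ p := by
        apply Finset.sum_le_sum
        intro j hj
        have hji : j < i := Finset.mem_Iio.mp hj
        have hji2 : (j:ℕ) < (i:ℕ) := hji
        exact ih j (by omega)
      rw [← Finset.sum_mul, hgeo i] at hIio
      have hr := hrow i
      nlinarith [hS0]
  have hkey : ∀ i : Fin s, |(x (Sum.inr i) : ℝ)| ≤ 2 ^ (i:ℕ) * M ^ p :=
    fun i => hkeyN ((i:ℕ)+1) i (Nat.lt_succ_self _)
  -- goal (2)
  have goal2 : ∀ i : Fin s, |(x (Sum.inr i) : ℝ)| ≤ 2 ^ (i:ℕ) * (M ^ p + M / 2) := by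
    intro i
    have h2 : (0:ℝ) < 2 ^ (i:ℕ) := by positivity
    nlinarith [hkey i]
  -- goal (3)
  have hβsum : (∑ i, |(x (Sum.inr i) : ℝ)|) ≤ (2 ^ s - 1) * M ^ p := by
    calc (∑ i, |(x (Sum.inr i) : ℝ)|) ≤ ∑ i : Fin s, (2:ℝ) ^ (i:ℕ) * M ^ p :=
          Finset.sum_le_sum fun i _ => hkey i
      _ = (∑ i : Fin s, (2:ℝ) ^ (i:ℕ)) * M ^ p := by rw [Finset.sum_mul]
      _ = (2 ^ s - 1) * M ^ p := by
          rw [Fin.sum_univ_eq_sum_range (fun t => (2:ℝ)^t) s,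
            geom_sum_eq (by norm_num : (2:ℝ) ≠ 1)]
          norm_num
  have goal3 : (∑ i, |(x (Sum.inr i) : ℝ)|) ≤ 2 ^ s * (M ^ p + M / 2) := by
    have h2 : (0:ℝ) < 2 ^ s := by positivity
    nlinarith [hβsum]
  refine ⟨goal1, goal2, goal3, ?_⟩
  intro hΔ
  have hΔR : (2:ℝ) ^ s ≤ (Δ:ℝ) := by exact_mod_cast hΔ
  have h2s : (1:ℝ) ≤ 2 ^ s := by exact_mod_cast Nat.one_le_two_pow (n := s)
  have hΔ1 : (1:ℝ) ≤ (Δ:ℝ) := le_trans h2s hΔR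
  have hMp : M ≤ M ^ p := by
    calc M = M ^ (1:ℝ) := (Real.rpow_one M).symm
      _ ≤ M ^ p := Real.rpow_le_rpow_of_exponent_le hM1 hp
  constructor
  · have hsplit : (∑ r, |(x r : ℝ)|)
        = (∑ i, |(x (Sum.inl i) : ℝ)|) + ∑ i, |(x (Sum.inr i) : ℝ)| :=
      Fintype.sum_sum_type _
    rw [hsplit]
    nlinarith [goal1, hβsum, hS0, hM0]
  · nlinarith [hM1, hMp, hΔ1]
end

section
/- Let H ∈ ℤ^{d×n} be in the block HNF form above, with the additional property that every n×n sub-matrix of H is nonsingular. If n > Δ^{3+2log₂3} + log₂ Δ, where Δ is the maximal absolute value of n×n minors of H, then d ≤ n + 1 (H has at most n+1 rows). -/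
/-!
Let `T` be the top `n × n` block of `H`, let `u`, `v` be two further rows, and write `δ_w(c)` for
the minor in which row `c` of `T` is replaced by `w`. Sylvester's identity gives, for `c ≠ c'`,
`det T · det(T; c ↦ u, c' ↦ v) = δ_u(c) δ_v(c') - δ_u(c') δ_v(c)`.
As all these minors are nonzero, `c ↦ (δ_u(c), δ_v(c))` is injective into `[-Δ, Δ]²`, so
`n ≤ (2Δ + 1)²`, which is below `Δ^(3 + 2 log₂ 3)` once `Δ ≥ 2`. If `Δ = 1`, all minors are `±1`
and the identity has an odd left and an even right side, so `n ≤ 1`.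
-/

open Matrix Real

open Function in
theorem Function.Injective.update {α β : Type*} [DecidableEq α] {f : α → β}
    (hf : Injective f) (a : α) {b : β} (hb : b ∉ Set.range f) : Injective (update f a b) := by
  intro x y hxy
  by_cases hx : x = a <;> by_cases hy : y = a
  · exact hx.trans hy.symm
  · rw [hx, update_self, update_of_ne hy] at hxy
    exact absurd ⟨y, hxy.symm⟩ hb
  · rw [hy, update_self, update_of_ne hx] at hxy
    exact absurd ⟨x, hxy⟩ hb
  · rwa [update_of_ne hx, update_of_ne hy, hf.eq_iff] at hxy

theorem injective_update_inl {ι κ : Type*} [DecidableEq ι] (c : ι) (a : κ) :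
    Function.Injective (Function.update (Sum.inl : ι → ι ⊕ κ) c (Sum.inr a)) :=
  Sum.inl_injective.update c (by simp)

theorem injective_update_update_inl {ι κ : Type*} [DecidableEq ι] {c c' : ι} (h : c ≠ c')
    {a b : κ} (hab : a ≠ b) :
    Function.Injective
      (Function.update (Function.update (Sum.inl : ι → ι ⊕ κ) c (Sum.inr a)) c' (Sum.inr b)) := by
  refine (injective_update_inl c a).update c' ?_
  rintro ⟨x, hx⟩
  rcases eq_or_ne x c with rfl | hxc <;> simp_all

namespace Matrix

variable {ι R : Type*} [DecidableEq ι]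

theorem submatrix_update_eq_updateRow {α : Type*} (H : Matrix α ι R) (f : ι → α) (c : ι)
    (x : α) : H.submatrix (Function.update f c x) id = (H.submatrix f id).updateRow c (H x) := by
  ext i j
  rcases eq_or_ne i c with rfl | hi <;> simp [updateRow_apply, *]

variable [Fintype ι]

section CommRing

variable [CommRing R]

theorem det_updateRow_eq_vecMul_adjugate (T : Matrix ι ι R) (c : ι) (u : ι → R) :
    (T.updateRow c u).det = (u ᵥ* T.adjugate) c := by
  rw [← cramer_transpose_apply, cramer_eq_adjugate_mulVec, ← adjugate_transpose,
    mulVec_transpose]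

theorem det_one_updateRow_updateRow {c c' : ι} (h : c ≠ c') (x y : ι → R) :
    (((1 : Matrix ι ι R).updateRow c x).updateRow c' y).det = x c * y c' - x c' * y c := by
  let U : Matrix ι (Fin 2) R := (of ![Pi.single c 1, Pi.single c' 1])ᵀ
  let V : Matrix (Fin 2) ι R := of ![x - Pi.single c 1, y - Pi.single c' 1]
  have hUV : ((1 : Matrix ι ι R).updateRow c x).updateRow c' y = 1 + U * V := by
    ext i j
    simp only [add_apply, mul_apply, Fin.sum_univ_two, U, V, of_apply, updateRow_apply,
      transpose_apply]
    rcases eq_or_ne i c' with rfl | hi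
    · simp [Ne.symm h, one_apply, Pi.single_apply, eq_comm]
    rcases eq_or_ne i c with rfl | hi'
    · simp [h, one_apply, Pi.single_apply, eq_comm]
    · simp [hi, hi']
  have hVU : V * U = !![x c - 1, x c'; y c, y c' - 1] := by
    ext r s
    fin_cases r <;> fin_cases s <;> simp [U, V, mul_apply, Pi.single_apply, h, Ne.symm h]
  rw [hUV, det_one_add_mul_comm, hVU, det_fin_two]
  simp

end CommRing

section IsDomain

variable [CommRing R] [IsDomain R] {T : Matrix ι ι R}

/-- Sylvester's determinant identity for two exchanged rows. -/
theorem det_updateRow_updateRow_mul_det (hT : T.det ≠ 0) {c c' : ι} (h : c ≠ c')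
    (u v : ι → R) :
    ((T.updateRow c u).updateRow c' v).det * T.det =
      (T.updateRow c u).det * (T.updateRow c' v).det -
        (T.updateRow c' u).det * (T.updateRow c v).det := by
  have hadj (w : ι → R) : w ᵥ* T.adjugate ᵥ* T = T.det • w := by
    rw [vecMul_vecMul, adjugate_mul, vecMul_smul, vecMul_one]
  have hmul : ((1 : Matrix ι ι R).updateRow c (u ᵥ* T.adjugate)).updateRow c'
      (v ᵥ* T.adjugate) * T = (T.updateRow c (T.det • u)).updateRow c' (T.det • v) := by
    rw [updateRow_mul, updateRow_mul, one_mul, hadj, hadj]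
  have hdet := congrArg det hmul
  rw [det_mul, det_one_updateRow_updateRow h, det_updateRow_smul, updateRow_comm _ h,
    det_updateRow_smul, ← updateRow_comm _ h] at hdet
  simp only [← det_updateRow_eq_vecMul_adjugate] at hdet
  apply mul_left_cancel₀ hT
  linear_combination -hdet

theorem injective_det_updateRow_pair (hT : T.det ≠ 0) {u v : ι → R}
    (huv : ∀ c c', c ≠ c' → ((T.updateRow c u).updateRow c' v).det ≠ 0) :
    Function.Injective fun c => ((T.updateRow c u).det, (T.updateRow c v).det) := by
  intro c c' hcc'
  by_contra h
  obtain ⟨hu, hv⟩ := Prod.mk.inj hcc'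
  apply mul_ne_zero (huv c c' h) hT
  rw [det_updateRow_updateRow_mul_det hT h, hu, hv, sub_self]

end IsDomain

section Int

variable {T : Matrix ι ι ℤ} {u v : ι → ℤ}

theorem card_le_sq_of_abs_det_updateRow_le (hT : T.det ≠ 0) {Δ : ℤ}
    (hu : ∀ c, |(T.updateRow c u).det| ≤ Δ) (hv : ∀ c, |(T.updateRow c v).det| ≤ Δ)
    (huv : ∀ c c', c ≠ c' → ((T.updateRow c u).updateRow c' v).det ≠ 0) :
    (Fintype.card ι : ℤ) ≤ (2 * Δ + 1) ^ 2 := by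
  rcases isEmpty_or_nonempty ι with hι | ⟨⟨c₀⟩⟩
  · simpa using sq_nonneg (2 * Δ + 1)
  have hΔ : 0 ≤ Δ := (abs_nonneg _).trans (hu c₀)
  have hmaps : ∀ c ∈ (Finset.univ : Finset ι),
      ((T.updateRow c u).det, (T.updateRow c v).det) ∈ Finset.Icc (-Δ) Δ ×ˢ Finset.Icc (-Δ) Δ :=
    fun c _ => Finset.mem_product.mpr
      ⟨Finset.mem_Icc.mpr (abs_le.mp (hu c)), Finset.mem_Icc.mpr (abs_le.mp (hv c))⟩
  have hcard := Finset.card_le_card_of_injOn _ hmaps (injective_det_updateRow_pair hT huv).injOn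
  rw [Finset.card_univ, Finset.card_product, Int.card_Icc] at hcard
  have hlen : ((Δ + 1 - -Δ).toNat : ℤ) = 2 * Δ + 1 := by omega
  calc (Fintype.card ι : ℤ) ≤ ((Δ + 1 - -Δ).toNat * (Δ + 1 - -Δ).toNat : ℕ) := by
        exact_mod_cast hcard
    _ = (2 * Δ + 1) ^ 2 := by push_cast [hlen]; ring

theorem card_le_one_of_odd_det_updateRow (hT : Odd T.det) (hu : ∀ c, Odd (T.updateRow c u).det)
    (hv : ∀ c, Odd (T.updateRow c v).det)
    (huv : ∀ c c', c ≠ c' → Odd ((T.updateRow c u).updateRow c' v).det) :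
    Fintype.card ι ≤ 1 := by
  by_contra! hcard
  obtain ⟨c, c', h⟩ := Fintype.exists_pair_of_one_lt_card hcard
  have hodd := (huv c c' h).mul hT
  rw [det_updateRow_updateRow_mul_det (fun h0 => by simp [h0] at hT) h] at hodd
  exact Int.not_even_iff_odd.mpr hodd (((hu c).mul (hv c')).sub_odd ((hu c').mul (hv c)))

end Int

section Minors

variable [CommRing R] {κ : Type*}

theorem exchange_minors_of_forall_minors {H : Matrix (ι ⊕ κ) ι R} {P : R → Prop}
    (hP : ∀ f : ι → ι ⊕ κ, Function.Injective f → P (H.submatrix f id).det) {a b : κ}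
    (hab : a ≠ b) :
    P (H.submatrix Sum.inl id).det ∧
      (∀ c, P ((H.submatrix Sum.inl id).updateRow c (H (Sum.inr a))).det) ∧
      (∀ c, P ((H.submatrix Sum.inl id).updateRow c (H (Sum.inr b))).det) ∧
      ∀ c c', c ≠ c' →
        P (((H.submatrix Sum.inl id).updateRow c (H (Sum.inr a))).updateRow c'
          (H (Sum.inr b))).det := by
  refine ⟨hP _ Sum.inl_injective, fun c => ?_, fun c => ?_, fun c c' h => ?_⟩
  · simpa only [submatrix_update_eq_updateRow] using hP _ (injective_update_inl c a)
  · simpa only [submatrix_update_eq_updateRow] using hP _ (injective_update_inl c b)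
  · simpa only [submatrix_update_eq_updateRow] using hP _ (injective_update_update_inl h hab)

variable {H : Matrix (ι ⊕ κ) ι ℤ}

theorem card_le_sq_of_forall_abs_det_submatrix_le
    (hne : ∀ f : ι → ι ⊕ κ, Function.Injective f → (H.submatrix f id).det ≠ 0) {Δ : ℤ}
    (hle : ∀ f : ι → ι ⊕ κ, Function.Injective f → |(H.submatrix f id).det| ≤ Δ) {a b : κ}
    (hab : a ≠ b) : (Fintype.card ι : ℤ) ≤ (2 * Δ + 1) ^ 2 := by
  obtain ⟨hT, hu, hv, huv⟩ := exchange_minors_of_forall_minors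
    (P := fun x => x ≠ 0 ∧ |x| ≤ Δ) (fun f hf => ⟨hne f hf, hle f hf⟩) hab
  exact card_le_sq_of_abs_det_updateRow_le hT.1 (hu · |>.2) (hv · |>.2) (huv · · · |>.1)

theorem card_le_one_of_forall_abs_det_submatrix_le_one
    (hne : ∀ f : ι → ι ⊕ κ, Function.Injective f → (H.submatrix f id).det ≠ 0)
    (hle : ∀ f : ι → ι ⊕ κ, Function.Injective f → |(H.submatrix f id).det| ≤ 1) {a b : κ}
    (hab : a ≠ b) : Fintype.card ι ≤ 1 := by
  have hodd (f : ι → ι ⊕ κ) (hf : Function.Injective f) : Odd (H.submatrix f id).det := by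
    rcases abs_le.mp (hle f hf) with ⟨h₁, h₂⟩
    obtain h | h : (H.submatrix f id).det = 1 ∨ (H.submatrix f id).det = -1 := by
      have := hne f hf; omega
    all_goals rw [h]; decide
  obtain ⟨hT, hu, hv, huv⟩ := exchange_minors_of_forall_minors hodd hab
  exact card_le_one_of_odd_det_updateRow hT hu hv huv

end Minors

end Matrix

theorem two_mul_add_one_sq_le_rpow {x : ℝ} (hx : 2 ≤ x) :
    (2 * x + 1) ^ 2 ≤ x ^ (3 + 2 * Real.logb 2 3) := by
  have hlog : 1 ≤ Real.logb 2 3 := by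
    rw [Real.le_logb_iff_rpow_le (by norm_num) (by norm_num)]
    norm_num
  calc (2 * x + 1) ^ 2 ≤ x ^ 5 := by nlinarith [pow_le_pow_left₀ (by norm_num) hx 3]
    _ = x ^ (5 : ℝ) := by norm_cast
    _ ≤ x ^ (3 + 2 * Real.logb 2 3) := Real.rpow_le_rpow_of_exponent_le (by linarith) (by linarith)

/-- if every `n × n` sub-matrix of `H` (block HNF, `n = k + s`,
`d = n + m`) is nonsingular and `n > Δ^{3 + 2·log₂3} + log₂ Δ`, then `H` has at most
`n + 1` rows, i.e. `m ≤ 1`. -/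
theorem stmt11 (k s m : ℕ) (D : BlockHNF k s m) (Δ : ℤ) (hΔ : D.IsMaxMinor Δ)
    (hns : ∀ f : (Fin k ⊕ Fin s) → ((Fin k ⊕ Fin s) ⊕ Fin m),
      Function.Injective f → (Matrix.of fun i j => D.H (f i) j).det ≠ 0)
    (hn : ((k + s : ℕ) : ℝ) >
      (Δ : ℝ) ^ ((3 : ℝ) + 2 * Real.logb 2 3) + Real.logb 2 Δ) :
    m ≤ 1 := by
  by_contra! hm
  obtain ⟨a, b, hab⟩ : ∃ a b : Fin m, a ≠ b := ⟨⟨0, by omega⟩, ⟨1, hm⟩, by simp [Fin.ext_iff]⟩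
  have hle (f) (hf : Function.Injective f) : |(D.H.submatrix f id).det| ≤ Δ := hΔ.2 ⟨f, hf, rfl⟩
  have hcard : (Fintype.card (Fin k ⊕ Fin s) : ℝ) = k + s := by simp
  push_cast at hn
  obtain rfl | hΔ2 :=
    (Int.one_le_abs (hns _ Sum.inl_injective) |>.trans (hle _ Sum.inl_injective)).eq_or_lt
  · have h₁ := Matrix.card_le_one_of_forall_abs_det_submatrix_le_one hns hle hab
    have : (Fintype.card (Fin k ⊕ Fin s) : ℝ) ≤ 1 := by exact_mod_cast h₁
    norm_num at hn
    linarith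
  · have h₁ := Matrix.card_le_sq_of_forall_abs_det_submatrix_le hns hle hab
    have h₂ := two_mul_add_one_sq_le_rpow (x := Δ) (by exact_mod_cast hΔ2)
    have h₃ := Real.logb_nonneg (b := 2) (x := Δ) (by norm_num) (by exact_mod_cast hΔ2.le)
    have : (Fintype.card (Fin k ⊕ Fin s) : ℝ) ≤ (2 * Δ + 1) ^ 2 := by exact_mod_cast h₁
    linarith
end
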